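/- Let χ : [n] → {•, ∘} with χ(1) = χ(n) = ∘ and χ^{-1}(∘) = {1 = l0 < l1 < ... < lm = n}. The map α sending π ∈ INC(χ) to the tuple (π|_{[l0,l1]}, π|_{[l1,l2]}, ..., π|_{[l_{m-1},l_m]}) of restrictions to consecutive ∘-intervals is an isomorphism of partially ordered sets from INC(χ) onto the product NC([l0,l1]) × NC([l1,l2]) × ... × NC([l_{m-1},l_m]). -/

import Mathlib

open scoped Classical

section Defs

variable {α : Type*}

/-- `P` is a partition of the finite set `S`: blocks are nonempty subsets of `S`
and every element of `S` lies in a unique block. -/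
def IsPartitionOn (S : Finset α) (P : Finset (Finset α)) : Prop :=
  (∀ B ∈ P, B.Nonempty ∧ B ⊆ S) ∧ ∀ x ∈ S, ∃! B, B ∈ P ∧ x ∈ B

/-- `P` is noncrossing: no `s₁ < r₁ < s₂ < r₂` with `s₁, s₂` in one block and
`r₁, r₂` in a different block. -/
def Noncrossing [LinearOrder α] (P : Finset (Finset α)) : Prop :=
  ∀ V ∈ P, ∀ W ∈ P, V ≠ W →
    ¬ ∃ s₁ r₁ s₂ r₂, s₁ ∈ V ∧ s₂ ∈ V ∧ r₁ ∈ W ∧ r₂ ∈ W ∧ s₁ < r₁ ∧ r₁ < s₂ ∧ s₂ < r₂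

/-- A block `V` is inner if some other block `W` has elements `s, t` with
`s < v < t` for all `v ∈ V`. -/
def IsInnerBlock [LinearOrder α] (P : Finset (Finset α)) (V : Finset α) : Prop :=
  ∃ W ∈ P, W ≠ V ∧ ∃ s ∈ W, ∃ t ∈ W, ∀ v ∈ V, s < v ∧ v < t

/-- `P` is an interval partition: no `s₁ < r < s₂` with `s₁, s₂` in one block
and `r` in a different block. -/
def IsIntervalPartition [LinearOrder α] (P : Finset (Finset α)) : Prop :=
  ∀ V ∈ P, ∀ W ∈ P, V ≠ W →
    ¬ ∃ s₁ r s₂, s₁ ∈ V ∧ s₂ ∈ V ∧ r ∈ W ∧ s₁ < r ∧ r < s₂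

/-- Reversed refinement order: every block of `P` is contained in a block of `Q`. -/
def Refines (P Q : Finset (Finset α)) : Prop := ∀ B ∈ P, ∃ C ∈ Q, B ⊆ C

/-- Noncrossing partition of the finite ordered set `S`. -/
def NCOn [LinearOrder α] (S : Finset α) (P : Finset (Finset α)) : Prop :=
  IsPartitionOn S P ∧ Noncrossing P

/-- Interval-noncrossing partition of `S` w.r.t. the coloring `χ`
(`χ k = true` means `k` is colored `∘`): a noncrossing partition such that
no `∘`-colored element lies in an inner block. -/
def INCOn [LinearOrder α] (S : Finset α) (χ : α → Bool) (P : Finset (Finset α)) : Prop :=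
  IsPartitionOn S P ∧ Noncrossing P ∧
    ∀ V ∈ P, IsInnerBlock P V → ∀ k ∈ V, χ k = false

/-- Restriction of a partition to a subset: nonempty intersections of blocks with `A`. -/
def restrictPart [DecidableEq α] (P : Finset (Finset α)) (A : Finset α) : Finset (Finset α) :=
  (P.image (· ∩ A)).filter (·.Nonempty)

end Defs

/-!
In an INC partition, a block containing points on both sides of a `∘`-point `c` contains `c`:
otherwise the block of `c` would sit strictly inside it, i.e. be inner. So a block of `π` is
recovered by chaining its traces on the intervals `[lᵢ₋₁, lᵢ]` through the `∘`-points it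
contains, which gives injectivity and reflection of the order (restriction clearly preserves
it). Conversely, a tuple of noncrossing partitions is glued from left to right, merging at each
`lᵢ` the two blocks containing it. A crossing or an inner block of the glued partition would
already be one in a single piece, because every other block lies on one side of `lᵢ`, and the
`∘`-points of `[lᵢ₋₁, lᵢ]` are its endpoints, which no inner block can contain.
-/

open Finset

section Partitions

variable {α : Type*}

theorem IsPartitionOn.eq_of_mem {S : Finset α} {P : Finset (Finset α)} (hP : IsPartitionOn S P)
    {B C : Finset α} {x : α} (hB : B ∈ P) (hC : C ∈ P) (hxB : x ∈ B) (hxC : x ∈ C) : B = C := by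
  obtain ⟨_, _, huniq⟩ := hP.2 x ((hP.1 B hB).2 hxB)
  exact (huniq B ⟨hB, hxB⟩).trans (huniq C ⟨hC, hxC⟩).symm

theorem Refines.refl (P : Finset (Finset α)) : Refines P P :=
  fun B hB => ⟨B, hB, subset_rfl⟩

theorem IsPartitionOn.subset_of_refines {S : Finset α} {P Q : Finset (Finset α)}
    (hP : IsPartitionOn S P) (hPQ : Refines P Q) (hQP : Refines Q P) : P ⊆ Q := by
  intro B hB
  obtain ⟨C, hC, hBC⟩ := hPQ B hB
  obtain ⟨B', hB', hCB'⟩ := hQP C hC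
  obtain ⟨x, hx⟩ := (hP.1 B hB).1
  have hBB' : B = B' := hP.eq_of_mem hB hB' hx (hCB' (hBC hx))
  rwa [subset_antisymm hBC (hBB' ▸ hCB')]

theorem IsPartitionOn.eq_of_refines {S : Finset α} {P Q : Finset (Finset α)}
    (hP : IsPartitionOn S P) (hQ : IsPartitionOn S Q) (hPQ : Refines P Q) (hQP : Refines Q P) :
    P = Q :=
  subset_antisymm (hP.subset_of_refines hPQ hQP) (hQ.subset_of_refines hQP hPQ)

variable [DecidableEq α]

theorem mem_restrictPart {P : Finset (Finset α)} {A D : Finset α} :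
    D ∈ restrictPart P A ↔ (∃ B ∈ P, B ∩ A = D) ∧ D.Nonempty := by
  simp [restrictPart]

theorem IsPartitionOn.restrict {S A : Finset α} {P : Finset (Finset α)}
    (hP : IsPartitionOn S P) (hA : A ⊆ S) : IsPartitionOn A (restrictPart P A) := by
  refine ⟨?_, fun x hx => ?_⟩
  · intro D hD
    obtain ⟨⟨B, -, rfl⟩, hne⟩ := mem_restrictPart.1 hD
    exact ⟨hne, inter_subset_right⟩
  · obtain ⟨B, ⟨hB, hxB⟩, -⟩ := hP.2 x (hA hx)
    have hx' : x ∈ B ∩ A := mem_inter.2 ⟨hxB, hx⟩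
    refine ⟨B ∩ A, ⟨mem_restrictPart.2 ⟨⟨B, hB, rfl⟩, ⟨x, hx'⟩⟩, hx'⟩, ?_⟩
    rintro D ⟨hD, hxD⟩
    obtain ⟨⟨C, hC, rfl⟩, -⟩ := mem_restrictPart.1 hD
    rw [hP.eq_of_mem hC hB (mem_inter.1 hxD).1 hxB]

theorem IsPartitionOn.restrictPart_self {S : Finset α} {P : Finset (Finset α)}
    (hP : IsPartitionOn S P) : restrictPart P S = P := by
  ext D
  rw [mem_restrictPart]
  constructor
  · rintro ⟨⟨B, hB, rfl⟩, -⟩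
    rwa [inter_eq_left.2 (hP.1 B hB).2]
  · intro hD
    exact ⟨⟨D, hD, inter_eq_left.2 (hP.1 D hD).2⟩, (hP.1 D hD).1⟩

theorem Refines.restrict {P Q : Finset (Finset α)} (h : Refines P Q) (A : Finset α) :
    Refines (restrictPart P A) (restrictPart Q A) := by
  intro D hD
  obtain ⟨⟨B, hB, rfl⟩, hne⟩ := mem_restrictPart.1 hD
  obtain ⟨C, hC, hBC⟩ := h B hB
  have hsub : B ∩ A ⊆ C ∩ A := inter_subset_inter hBC subset_rfl
  exact ⟨C ∩ A, mem_restrictPart.2 ⟨⟨C, hC, rfl⟩, hne.mono hsub⟩, hsub⟩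

theorem IsPartitionOn.mem_of_refines_restrictPart {S A : Finset α} {P Q : Finset (Finset α)}
    (hQ : IsPartitionOn S Q) (h : Refines (restrictPart P A) (restrictPart Q A))
    {B C : Finset α} {y z : α} (hB : B ∈ P) (hyB : y ∈ B) (hzB : z ∈ B) (hyA : y ∈ A)
    (hzA : z ∈ A) (hC : C ∈ Q) (hzC : z ∈ C) : y ∈ C := by
  obtain ⟨D, hD, hsub⟩ := h (B ∩ A) (mem_restrictPart.2 ⟨⟨B, hB, rfl⟩, ⟨z, mem_inter.2 ⟨hzB, hzA⟩⟩⟩)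
  obtain ⟨⟨C', hC', rfl⟩, -⟩ := mem_restrictPart.1 hD
  have hzC' : z ∈ C' := (mem_inter.1 (hsub (mem_inter.2 ⟨hzB, hzA⟩))).1
  rw [← hQ.eq_of_mem hC' hC hzC' hzC]
  exact (mem_inter.1 (hsub (mem_inter.2 ⟨hyB, hyA⟩))).1

end Partitions

section Noncrossing

variable {α : Type*} [LinearOrder α]

def Crosses (V W : Finset α) : Prop :=
  ∃ s₁ r₁ s₂ r₂, s₁ ∈ V ∧ s₂ ∈ V ∧ r₁ ∈ W ∧ r₂ ∈ W ∧ s₁ < r₁ ∧ r₁ < s₂ ∧ s₂ < r₂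

theorem Crosses.mono {V W V' W' : Finset α} (h : Crosses V W) (hV : V ⊆ V') (hW : W ⊆ W') :
    Crosses V' W' := by
  obtain ⟨s₁, r₁, s₂, r₂, hs₁, hs₂, hr₁, hr₂, h₁, h₂, h₃⟩ := h
  exact ⟨s₁, r₁, s₂, r₂, hV hs₁, hV hs₂, hW hr₁, hW hr₂, h₁, h₂, h₃⟩

theorem INCOn.ncOn {S : Finset α} {χ : α → Bool} {P : Finset (Finset α)}
    (hP : INCOn S χ P) : NCOn S P :=
  ⟨hP.1, hP.2.1⟩

variable [DecidableEq α]

theorem Noncrossing.restrict {P : Finset (Finset α)} (hP : Noncrossing P) (A : Finset α) :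
    Noncrossing (restrictPart P A) := by
  intro V hV W hW hVW hcross
  obtain ⟨⟨B, hB, rfl⟩, -⟩ := mem_restrictPart.1 hV
  obtain ⟨⟨C, hC, rfl⟩, -⟩ := mem_restrictPart.1 hW
  exact hP B hB C hC (by rintro rfl; exact hVW rfl)
    (Crosses.mono hcross inter_subset_left inter_subset_left)

theorem NCOn.restrict {S A : Finset α} {P : Finset (Finset α)} (hP : NCOn S P) (hA : A ⊆ S) :
    NCOn A (restrictPart P A) :=
  ⟨hP.1.restrict hA, hP.2.restrict A⟩

theorem IsPartitionOn.not_crosses_inter {S A V W : Finset α} {P : Finset (Finset α)}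
    (hP : IsPartitionOn S P) (hPA : Noncrossing (restrictPart P A)) (hV : V ∈ P) (hW : W ∈ P)
    (hVW : V ≠ W) : ¬ Crosses (V ∩ A) (W ∩ A) := by
  intro hcross
  obtain ⟨s, -, -, r, hs, -, -, hr, -⟩ := id hcross
  refine hPA _ (mem_restrictPart.2 ⟨⟨V, hV, rfl⟩, ⟨s, hs⟩⟩) _
    (mem_restrictPart.2 ⟨⟨W, hW, rfl⟩, ⟨r, hr⟩⟩) (fun h => hVW ?_) hcross
  exact hP.eq_of_mem hV hW (mem_inter.1 hs).1 (mem_inter.1 (h ▸ hs)).1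

end Noncrossing

section INC

variable {α : Type*} [LinearOrder α] {χ : α → Bool}

theorem INCOn.mem_of_lt_of_lt {S B : Finset α} {P : Finset (Finset α)} (hP : INCOn S χ P)
    (hB : B ∈ P) {x y c : α} (hx : x ∈ B) (hy : y ∈ B) (hc : c ∈ S) (hχc : χ c = true)
    (hxc : x < c) (hcy : c < y) : c ∈ B := by
  obtain ⟨W, ⟨hW, hcW⟩, -⟩ := hP.1.2 c hc
  by_contra hcB
  have hWB : W ≠ B := by rintro rfl; exact hcB hcW
  have hne : ∀ w ∈ W, w ≠ x ∧ w ≠ y := fun w hw =>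
    ⟨by rintro rfl; exact hWB (hP.1.eq_of_mem hW hB hw hx),
      by rintro rfl; exact hWB (hP.1.eq_of_mem hW hB hw hy)⟩
  -- a point of `W` outside `(x, y)` would make `W` and `B` cross, so `W` is inner
  have hbetween : ∀ w ∈ W, x < w ∧ w < y := fun w hw => by
    refine ⟨lt_of_not_ge fun hwx => ?_, lt_of_not_ge fun hyw => ?_⟩
    · exact hP.2.1 W hW B hB hWB
        ⟨w, x, c, y, hw, hcW, hx, hy, lt_of_le_of_ne hwx (hne w hw).1, hxc, hcy⟩
    · exact hP.2.1 B hB W hW hWB.symm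
        ⟨x, c, y, w, hx, hy, hcW, hw, hxc, hcy, lt_of_le_of_ne hyw (hne w hw).2.symm⟩
  have hinner : IsInnerBlock P W := ⟨B, hB, hWB.symm, x, hx, y, hy, hbetween⟩
  simp [hP.2.2 W hW hinner c hcW] at hχc

theorem INCOn.of_ncOn_Icc [LocallyFiniteOrder α] {a b : α} {P : Finset (Finset α)}
    (hP : NCOn (Icc a b) P) (hχ : ∀ x ∈ Icc a b, χ x = true → x = a ∨ x = b) :
    INCOn (Icc a b) χ P := by
  refine ⟨hP.1, hP.2, fun V hV ⟨W, hW, _, s, hs, t, ht, hst⟩ k hk => ?_⟩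
  have hsW := mem_Icc.1 ((hP.1.1 W hW).2 hs)
  have htW := mem_Icc.1 ((hP.1.1 W hW).2 ht)
  have hkS := (hP.1.1 V hV).2 hk
  refine Bool.eq_false_iff.2 fun hχk => ?_
  rcases hχ k hkS hχk with rfl | rfl
  · exact absurd hsW.1 (not_le.2 (hst _ hk).1)
  · exact absurd htW.2 (not_le.2 (hst _ hk).2)

end INC

section Glue

variable {α : Type*} [DecidableEq α]

def glue (P Q : Finset (Finset α)) (B C : Finset α) : Finset (Finset α) :=
  insert (B ∪ C) (P.erase B ∪ Q.erase C)

theorem mem_glue {P Q : Finset (Finset α)} {B C D : Finset α} :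
    D ∈ glue P Q B C ↔ D = B ∪ C ∨ (D ∈ P ∧ D ≠ B) ∨ (D ∈ Q ∧ D ≠ C) := by
  simp only [glue, mem_insert, mem_union, mem_erase]
  tauto

theorem glue_comm (P Q : Finset (Finset α)) (B C : Finset α) : glue P Q B C = glue Q P C B := by
  simp only [glue, union_comm]

theorem restrictPart_glue_of_subset_left {S T A B C : Finset α} {P Q : Finset (Finset α)} {p : α}
    (hQ : IsPartitionOn T Q) (hB : B ∈ P) (hpB : p ∈ B) (hC : C ∈ Q) (hpC : p ∈ C)
    (hST : ∀ x ∈ S, x ∈ T → x = p) (hA : A ⊆ S) :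
    restrictPart (glue P Q B C) A = restrictPart P A := by
  have hQA : ∀ E ∈ Q, E ≠ C → E ∩ A = ∅ := by
    refine fun E hE hEC => eq_empty_of_forall_notMem fun x hx => hEC ?_
    obtain ⟨hxE, hxA⟩ := mem_inter.1 hx
    have hxp := hST x (hA hxA) ((hQ.1 E hE).2 hxE)
    exact hQ.eq_of_mem hE hC (hxp ▸ hxE) hpC
  have hM : (B ∪ C) ∩ A = B ∩ A := by
    refine union_inter_distrib_right B C A ▸ union_eq_left.2 fun x hx => ?_
    obtain ⟨hxC, hxA⟩ := mem_inter.1 hx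
    exact mem_inter.2 ⟨hST x (hA hxA) ((hQ.1 C hC).2 hxC) ▸ hpB, hxA⟩
  ext D
  simp only [mem_restrictPart, mem_glue]
  constructor
  · rintro ⟨⟨E, hE | ⟨hE, -⟩ | ⟨hE, hEC⟩, rfl⟩, hne⟩
    · exact ⟨⟨B, hB, (hE ▸ hM).symm⟩, hne⟩
    · exact ⟨⟨E, hE, rfl⟩, hne⟩
    · exact absurd (hQA E hE hEC ▸ hne) Finset.not_nonempty_empty
  · rintro ⟨⟨E, hE, rfl⟩, hne⟩
    by_cases hEB : E = B
    · exact ⟨⟨B ∪ C, Or.inl rfl, hEB ▸ hM⟩, hne⟩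
    · exact ⟨⟨E, Or.inr (Or.inl ⟨hE, hEB⟩), rfl⟩, hne⟩

end Glue

section Gluing

variable {α : Type*} [LinearOrder α]

structure GluingData (S T : Finset α) (P Q : Finset (Finset α)) (p : α) (B C : Finset α) :
    Prop where
  left : IsPartitionOn S P
  right : IsPartitionOn T Q
  le_of_mem_left : ∀ x ∈ S, x ≤ p
  le_of_mem_right : ∀ x ∈ T, p ≤ x
  mem_left : B ∈ P
  mem_block_left : p ∈ B
  mem_right : C ∈ Q
  mem_block_right : p ∈ C

namespace GluingData

variable {S T B C D : Finset α} {P Q : Finset (Finset α)} {p x : α}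

theorem eq_of_mem_of_mem (h : GluingData S T P Q p B C) (hS : x ∈ S) (hT : x ∈ T) : x = p :=
  le_antisymm (h.le_of_mem_left x hS) (h.le_of_mem_right x hT)

theorem lt_of_mem_left (h : GluingData S T P Q p B C) (hD : D ∈ P) (hDB : D ≠ B) (hx : x ∈ D) :
    x < p :=
  lt_of_le_of_ne (h.le_of_mem_left x ((h.left.1 D hD).2 hx)) fun hxp =>
    hDB (h.left.eq_of_mem hD h.mem_left (hxp ▸ hx) h.mem_block_left)

theorem lt_of_mem_right (h : GluingData S T P Q p B C) (hD : D ∈ Q) (hDC : D ≠ C) (hx : x ∈ D) :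
    p < x :=
  lt_of_le_of_ne (h.le_of_mem_right x ((h.right.1 D hD).2 hx)) fun hpx =>
    hDC (h.right.eq_of_mem hD h.mem_right (hpx ▸ hx) h.mem_block_right)

variable [DecidableEq α]

theorem restrictPart_left (h : GluingData S T P Q p B C) {A : Finset α} (hA : A ⊆ S) :
    restrictPart (glue P Q B C) A = restrictPart P A :=
  restrictPart_glue_of_subset_left h.right h.mem_left h.mem_block_left h.mem_right
    h.mem_block_right (fun _ => h.eq_of_mem_of_mem) hA

theorem restrictPart_right (h : GluingData S T P Q p B C) {A : Finset α} (hA : A ⊆ T) :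
    restrictPart (glue P Q B C) A = restrictPart Q A :=
  glue_comm P Q B C ▸ restrictPart_glue_of_subset_left h.left h.mem_right h.mem_block_right
    h.mem_left h.mem_block_left (fun _ hT hS => h.eq_of_mem_of_mem hS hT) hA

theorem eq_union_of_mem (h : GluingData S T P Q p B C) (hD : D ∈ glue P Q B C) (hxD : x ∈ D)
    (hx : x ∈ B ∪ C) : D = B ∪ C := by
  rcases mem_glue.1 hD with rfl | ⟨hDP, hDB⟩ | ⟨hDQ, hDC⟩
  · rfl
  · have hxp := h.lt_of_mem_left hDP hDB hxD
    rcases mem_union.1 hx with hxB | hxC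
    · exact absurd (h.left.eq_of_mem hDP h.mem_left hxD hxB) hDB
    · exact absurd (h.le_of_mem_right x ((h.right.1 C h.mem_right).2 hxC)) (not_le.2 hxp)
  · have hpx := h.lt_of_mem_right hDQ hDC hxD
    rcases mem_union.1 hx with hxB | hxC
    · exact absurd (h.le_of_mem_left x ((h.left.1 B h.mem_left).2 hxB)) (not_le.2 hpx)
    · exact absurd (h.right.eq_of_mem hDQ h.mem_right hxD hxC) hDC

theorem eq_of_mem (h : GluingData S T P Q p B C) {D₁ D₂ : Finset α} (hD₁ : D₁ ∈ glue P Q B C)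
    (hD₂ : D₂ ∈ glue P Q B C) (hx₁ : x ∈ D₁) (hx₂ : x ∈ D₂) : D₁ = D₂ := by
  rcases mem_glue.1 hD₁ with rfl | ⟨hP₁, hB₁⟩ | ⟨hQ₁, hC₁⟩
  · exact (h.eq_union_of_mem hD₂ hx₂ hx₁).symm
  all_goals rcases mem_glue.1 hD₂ with rfl | ⟨hP₂, hB₂⟩ | ⟨hQ₂, hC₂⟩
  · exact h.eq_union_of_mem hD₁ hx₁ hx₂
  · exact h.left.eq_of_mem hP₁ hP₂ hx₁ hx₂
  · exact absurd ((h.lt_of_mem_left hP₁ hB₁ hx₁).trans (h.lt_of_mem_right hQ₂ hC₂ hx₂))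
      (lt_irrefl x)
  · exact h.eq_union_of_mem hD₁ hx₁ hx₂
  · exact absurd ((h.lt_of_mem_left hP₂ hB₂ hx₂).trans (h.lt_of_mem_right hQ₁ hC₁ hx₁))
      (lt_irrefl x)
  · exact h.right.eq_of_mem hQ₁ hQ₂ hx₁ hx₂

theorem isPartitionOn (h : GluingData S T P Q p B C) :
    IsPartitionOn (S ∪ T) (glue P Q B C) := by
  refine ⟨fun D hD => ?_, fun x hx => ?_⟩
  · rcases mem_glue.1 hD with rfl | ⟨hDP, -⟩ | ⟨hDQ, -⟩
    · exact ⟨⟨p, mem_union_left _ h.mem_block_left⟩,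
        union_subset_union (h.left.1 B h.mem_left).2 (h.right.1 C h.mem_right).2⟩
    · exact ⟨(h.left.1 D hDP).1, (h.left.1 D hDP).2.trans subset_union_left⟩
    · exact ⟨(h.right.1 D hDQ).1, (h.right.1 D hDQ).2.trans subset_union_right⟩
  · suffices ∃ D ∈ glue P Q B C, x ∈ D from
      let ⟨D, hD, hxD⟩ := this
      ⟨D, ⟨hD, hxD⟩, fun D' hD' => h.eq_of_mem hD'.1 hD hD'.2 hxD⟩
    rcases mem_union.1 hx with hxS | hxT
    · obtain ⟨E, ⟨hE, hxE⟩, -⟩ := h.left.2 x hxS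
      by_cases hEB : E = B
      · exact ⟨B ∪ C, mem_glue.2 (Or.inl rfl), mem_union_left _ (hEB ▸ hxE)⟩
      · exact ⟨E, mem_glue.2 (Or.inr (Or.inl ⟨hE, hEB⟩)), hxE⟩
    · obtain ⟨E, ⟨hE, hxE⟩, -⟩ := h.right.2 x hxT
      by_cases hEC : E = C
      · exact ⟨B ∪ C, mem_glue.2 (Or.inl rfl), mem_union_right _ (hEC ▸ hxE)⟩
      · exact ⟨E, mem_glue.2 (Or.inr (Or.inr ⟨hE, hEC⟩)), hxE⟩

theorem mem_left_of_lt (h : GluingData S T P Q p B C) (hx : x ∈ B ∪ C) (hxp : x < p) : x ∈ B :=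
  (mem_union.1 hx).resolve_right fun hxC =>
    not_le.2 hxp (h.le_of_mem_right x ((h.right.1 C h.mem_right).2 hxC))

theorem mem_right_of_lt (h : GluingData S T P Q p B C) (hx : x ∈ B ∪ C) (hpx : p < x) : x ∈ C :=
  (mem_union.1 hx).resolve_left fun hxB =>
    not_le.2 hpx (h.le_of_mem_left x ((h.left.1 B h.mem_left).2 hxB))

theorem noncrossing (h : GluingData S T P Q p B C) (hP : Noncrossing P) (hQ : Noncrossing Q) :
    Noncrossing (glue P Q B C) := by
  have hG := h.isPartitionOn
  have hGS : Noncrossing (restrictPart (glue P Q B C) S) := by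
    rwa [h.restrictPart_left subset_rfl, h.left.restrictPart_self]
  have hGT : Noncrossing (restrictPart (glue P Q B C) T) := by
    rwa [h.restrictPart_right subset_rfl, h.right.restrictPart_self]
  have inS : ∀ {D y}, D ∈ glue P Q B C → y ∈ D → y ≤ p → y ∈ D ∩ S := fun hD hy hyp =>
    mem_inter.2 ⟨hy, (mem_union.1 ((hG.1 _ hD).2 hy)).elim id fun hyT =>
      (le_antisymm hyp (h.le_of_mem_right _ hyT)) ▸ (h.left.1 B h.mem_left).2 h.mem_block_left⟩
  have inT : ∀ {D y}, D ∈ glue P Q B C → y ∈ D → p ≤ y → y ∈ D ∩ T := fun hD hy hpy =>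
    mem_inter.2 ⟨hy, (mem_union.1 ((hG.1 _ hD).2 hy)).elim (fun hyS =>
      (le_antisymm (h.le_of_mem_left _ hyS) hpy) ▸ (h.right.1 C h.mem_right).2 h.mem_block_right)
      id⟩
  have hpM : p ∈ B ∪ C := mem_union_left _ h.mem_block_left
  intro V hV W hW hVW ⟨s₁, r₁, s₂, r₂, hs₁, hs₂, hr₁, hr₂, h₁, h₂, h₃⟩
  -- each block other than `B ∪ C` lies on one side of `p`, so the crossing can be moved into
  -- `S` or into `T`, replacing an endpoint by `p` if needed
  rcases le_or_gt r₂ p with hr₂p | hpr₂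
  · exact hG.not_crosses_inter hGS hV hW hVW ⟨s₁, r₁, s₂, r₂, inS hV hs₁ (by order),
      inS hV hs₂ (by order), inS hW hr₁ (by order), inS hW hr₂ hr₂p, h₁, h₂, h₃⟩
  rcases le_or_gt p s₁ with hps₁ | hs₁p
  · exact hG.not_crosses_inter hGT hV hW hVW ⟨s₁, r₁, s₂, r₂, inT hV hs₁ hps₁,
      inT hV hs₂ (by order), inT hW hr₁ (by order), inT hW hr₂ (by order), h₁, h₂, h₃⟩
  rcases mem_glue.1 hV with rfl | ⟨hVP, hVB⟩ | ⟨hVQ, hVC⟩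
  · rcases mem_glue.1 hW with rfl | ⟨hWP, hWB⟩ | ⟨hWQ, hWC⟩
    · exact hVW rfl
    · exact absurd (h.lt_of_mem_left hWP hWB hr₂) (not_lt.2 hpr₂.le)
    · have hpr₁ := h.lt_of_mem_right hWQ hWC hr₁
      exact hG.not_crosses_inter hGT hV hW hVW ⟨p, r₁, s₂, r₂, inT hV hpM le_rfl,
        inT hV hs₂ (by order), inT hW hr₁ hpr₁.le, inT hW hr₂ hpr₂.le, hpr₁, h₂, h₃⟩
  · have hs₂p := h.lt_of_mem_left hVP hVB hs₂
    rcases mem_glue.1 hW with rfl | ⟨hWP, hWB⟩ | ⟨hWQ, hWC⟩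
    · exact hG.not_crosses_inter hGS hV hW hVW ⟨s₁, r₁, s₂, p, inS hV hs₁ hs₁p.le,
        inS hV hs₂ hs₂p.le, inS hW hr₁ (by order), inS hW hpM le_rfl, h₁, h₂, hs₂p⟩
    · exact absurd (h.lt_of_mem_left hWP hWB hr₂) (not_lt.2 hpr₂.le)
    · exact absurd (h.lt_of_mem_right hWQ hWC hr₁) (not_lt.2 (h₂.trans hs₂p).le)
  · exact absurd (h.lt_of_mem_right hVQ hVC hs₁) (not_lt.2 hs₁p.le)

theorem isInnerBlock (h : GluingData S T P Q p B C) {V : Finset α} (hV : V ∈ glue P Q B C)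
    (hVi : IsInnerBlock (glue P Q B C) V) :
    (V ∈ P ∧ IsInnerBlock P V) ∨ (V ∈ Q ∧ IsInnerBlock Q V) := by
  obtain ⟨W, hW, hWV, s, hs, t, ht, hst⟩ := hVi
  rcases mem_glue.1 hV with rfl | ⟨hVP, hVB⟩ | ⟨hVQ, hVC⟩
  · obtain ⟨hsp, hpt⟩ := hst p (mem_union_left _ h.mem_block_left)
    rcases mem_glue.1 hW with rfl | ⟨hWP, hWB⟩ | ⟨hWQ, hWC⟩
    · exact absurd rfl hWV
    · exact absurd (h.lt_of_mem_left hWP hWB ht) (not_lt.2 hpt.le)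
    · exact absurd (h.lt_of_mem_right hWQ hWC hs) (not_lt.2 hsp.le)
  · obtain ⟨v, hv⟩ := (h.left.1 V hVP).1
    have hvp := h.lt_of_mem_left hVP hVB hv
    refine Or.inl ⟨hVP, ?_⟩
    rcases mem_glue.1 hW with rfl | ⟨hWP, hWB⟩ | ⟨hWQ, hWC⟩
    · exact ⟨B, h.mem_left, hVB.symm, s, h.mem_left_of_lt hs ((hst v hv).1.trans hvp), p,
        h.mem_block_left, fun u hu => ⟨(hst u hu).1, h.lt_of_mem_left hVP hVB hu⟩⟩
    · exact ⟨W, hWP, hWV, s, hs, t, ht, hst⟩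
    · exact absurd ((h.lt_of_mem_right hWQ hWC hs).trans (hst v hv).1) (not_lt.2 hvp.le)
  · obtain ⟨v, hv⟩ := (h.right.1 V hVQ).1
    have hpv := h.lt_of_mem_right hVQ hVC hv
    refine Or.inr ⟨hVQ, ?_⟩
    rcases mem_glue.1 hW with rfl | ⟨hWP, hWB⟩ | ⟨hWQ, hWC⟩
    · exact ⟨C, h.mem_right, hVC.symm, p, h.mem_block_right, t,
        h.mem_right_of_lt ht (hpv.trans (hst v hv).2),
        fun u hu => ⟨h.lt_of_mem_right hVQ hVC hu, (hst u hu).2⟩⟩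
    · exact absurd ((hst v hv).2.trans (h.lt_of_mem_left hWP hWB ht)) (not_lt.2 hpv.le)
    · exact ⟨W, hWQ, hWV, s, hs, t, ht, hst⟩

theorem incOn (h : GluingData S T P Q p B C) {χ : α → Bool} (hP : INCOn S χ P)
    (hQ : INCOn T χ Q) : INCOn (S ∪ T) χ (glue P Q B C) :=
  ⟨h.isPartitionOn, h.noncrossing hP.2.1 hQ.2.1, fun V hV hVi =>
    (h.isInnerBlock hV hVi).elim (fun ⟨hVP, hi⟩ => hP.2.2 V hVP hi)
      fun ⟨hVQ, hi⟩ => hQ.2.2 V hVQ hi⟩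

end GluingData

end Gluing

theorem Finset.Icc_union_Icc_eq_Icc {α : Type*} [LinearOrder α] [LocallyFiniteOrder α]
    [DecidableEq α]
    {a b c : α} (hab : a ≤ b) (hbc : b ≤ c) : Icc a b ∪ Icc b c = Icc a c :=
  coe_injective (by push_cast; exact Set.Icc_union_Icc_eq_Icc hab hbc)

theorem ncOn_Icc_self {α : Type*} [LinearOrder α] [LocallyFiniteOrder α] (a : α) :
    NCOn (Icc a a) {{a}} := by
  simp only [NCOn, IsPartitionOn, Noncrossing, Icc_self, mem_singleton]
  exact ⟨⟨fun B hB => ⟨hB ▸ singleton_nonempty a, hB.le⟩,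
    fun x hx => ⟨{a}, ⟨rfl, hx ▸ mem_singleton_self a⟩, fun _ hB => hB.1⟩⟩,
    fun V hV W hW hVW => absurd (hV.trans hW.symm) hVW⟩

section Chain

variable {α : Type*} [LinearOrder α] [LocallyFiniteOrder α] {m : ℕ} {l : Fin (m + 1) → α}
  {χ : α → Bool}

theorem StrictMono.eq_castSucc_or_eq_succ (hl : StrictMono l) {i : Fin m} {k : Fin (m + 1)}
    (hk : l k ∈ Icc (l i.castSucc) (l i.succ)) : k = i.castSucc ∨ k = i.succ := by
  obtain ⟨h₁, h₂⟩ := mem_Icc.1 hk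
  rw [hl.le_iff_le, Fin.le_def] at h₁ h₂
  simp only [Fin.val_succ, Fin.val_castSucc] at h₁ h₂
  rcases Nat.le_succ_iff.1 h₂ with h | h
  · exact Or.inl (Fin.ext (by simp; omega))
  · exact Or.inr (Fin.ext (by simpa using h))

variable [DecidableEq α]

theorem refines_of_forall_refines_restrictPart (hl : StrictMono l) (hχ : ∀ i, χ (l i) = true)
    {π₁ π₂ : Finset (Finset α)} (h₁ : INCOn (Icc (l 0) (l (Fin.last m))) χ π₁)
    (h₂ : IsPartitionOn (Icc (l 0) (l (Fin.last m))) π₂)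
    (h : ∀ i : Fin m, Refines (restrictPart π₁ (Icc (l i.castSucc) (l i.succ)))
      (restrictPart π₂ (Icc (l i.castSucc) (l i.succ)))) :
    Refines π₁ π₂ := by
  intro B hB
  have hBS := (h₁.1.1 B hB).2
  obtain ⟨x, hxB, hxmin⟩ : ∃ x ∈ B, ∀ y ∈ B, x ≤ y :=
    ⟨B.min' (h₁.1.1 B hB).1, min'_mem _ _, fun y hy => min'_le _ y hy⟩
  obtain ⟨C, ⟨hC, hxC⟩, -⟩ := h₂.2 x (hBS hxB)
  refine ⟨C, hC, fun y hy => ?_⟩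
  -- walk from `x` to `y` through the `∘`-points in between, which all lie in `B`
  suffices key : ∀ i : Fin (m + 1), ∀ y ∈ B, y ≤ l i → y ∈ C from
    key (Fin.last m) y hy (mem_Icc.1 (hBS hy)).2
  intro i
  induction i using Fin.induction with
  | zero =>
    intro y hy hy0
    rwa [le_antisymm (hy0.trans (mem_Icc.1 (hBS hxB)).1) (hxmin y hy)]
  | succ i ih =>
    intro y hy hyi
    rcases le_or_gt y (l i.castSucc) with hyl | hly
    · exact ih y hy hyl
    obtain ⟨z, hzB, hzC, hlz, hzy⟩ : ∃ z ∈ B, z ∈ C ∧ l i.castSucc ≤ z ∧ z ≤ y := by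
      rcases le_or_gt (l i.castSucc) x with hlx | hxl
      · exact ⟨x, hxB, hxC, hlx, hxmin y hy⟩
      · have hlS : l i.castSucc ∈ Icc (l 0) (l (Fin.last m)) :=
          mem_Icc.2 ⟨hl.monotone (Fin.zero_le _), hl.monotone (Fin.le_last _)⟩
        have hlB := h₁.mem_of_lt_of_lt hB hxB hy hlS (hχ _) hxl hly
        exact ⟨_, hlB, ih _ hlB le_rfl, le_rfl, hly.le⟩
    exact h₂.mem_of_refines_restrictPart (h i) hB hy hzB (mem_Icc.2 ⟨hlz.trans hzy, hyi⟩)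
      (mem_Icc.2 ⟨hlz, hzy.trans hyi⟩) hC hzC

theorem exists_incOn_restrictPart_eq (hl : StrictMono l) (hχ : ∀ k, χ k = true → ∃ i, l i = k)
    {f : Fin m → Finset (Finset α)} (hf : ∀ i, NCOn (Icc (l i.castSucc) (l i.succ)) (f i))
    (j : Fin (m + 1)) :
    ∃ π, INCOn (Icc (l 0) (l j)) χ π ∧
      ∀ i : Fin m, i.succ ≤ j → restrictPart π (Icc (l i.castSucc) (l i.succ)) = f i := by
  induction j using Fin.induction with
  | zero =>
    refine ⟨{{l 0}}, INCOn.of_ncOn_Icc (ncOn_Icc_self _) fun x hx _ => ?_,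
      fun i hi => absurd hi (not_le.2 (Fin.succ_pos i))⟩
    exact Or.inl (by simpa using hx)
  | succ j ih =>
    obtain ⟨π, hπ, hres⟩ := ih
    have hlj : l j.castSucc ≤ l j.succ := (hl (Fin.castSucc_lt_succ (i := j))).le
    obtain ⟨B, ⟨hB, hpB⟩, -⟩ := hπ.1.2 _ (right_mem_Icc.2 (hl.monotone (Fin.zero_le _)))
    obtain ⟨C, ⟨hC, hpC⟩, -⟩ := (hf j).1.2 _ (left_mem_Icc.2 hlj)
    have hglue : GluingData _ _ π (f j) (l j.castSucc) B C :=
      ⟨hπ.1, (hf j).1, fun x hx => (mem_Icc.1 hx).2, fun x hx => (mem_Icc.1 hx).1, hB, hpB, hC,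
        hpC⟩
    have hfj : INCOn (Icc (l j.castSucc) (l j.succ)) χ (f j) := by
      refine INCOn.of_ncOn_Icc (hf j) fun x hx hχx => ?_
      obtain ⟨k, rfl⟩ := hχ x hχx
      exact (hl.eq_castSucc_or_eq_succ hx).imp (congrArg l) (congrArg l)
    refine ⟨glue π (f j) B C, ?_, fun i hi => ?_⟩
    · rw [← Icc_union_Icc_eq_Icc (hl.monotone (Fin.zero_le _)) hlj]
      exact hglue.incOn hπ hfj
    rcases eq_or_ne i j with rfl | hij
    · rw [hglue.restrictPart_right subset_rfl, (hf i).1.restrictPart_self]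
    · have hi' : i.succ ≤ j.castSucc := by
        rw [Fin.le_def] at hi ⊢
        simp only [Fin.val_succ, Fin.val_castSucc] at hi ⊢
        omega
      rw [hglue.restrictPart_left (Icc_subset_Icc (hl.monotone (Fin.zero_le _)) (hl.monotone hi')),
        hres i hi']

end Chain

/-- the map π ↦ (π|_[l₀,l₁], ..., π|_[l_{m-1},l_m]) is a poset
isomorphism from INC(χ) onto the product NC([l₀,l₁]) × ⋯ × NC([l_{m-1},l_m]). -/
theorem INC_orderIso_prod_NC {n m : ℕ} (hn : 0 < n) (χ : Fin n → Bool)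
    (l : Fin (m + 1) → Fin n) (hmono : StrictMono l)
    (h0 : l 0 = ⟨0, hn⟩) (hlast : l (Fin.last m) = ⟨n - 1, Nat.sub_lt hn one_pos⟩)
    (hcirc : ∀ k : Fin n, χ k = true ↔ ∃ i, l i = k) :
    -- well defined into the product of the NC([l_{i-1}, l_i])
    (∀ π : Finset (Finset (Fin n)), INCOn Finset.univ χ π → ∀ i : Fin m,
      NCOn (Finset.Icc (l i.castSucc) (l i.succ))
        (restrictPart π (Finset.Icc (l i.castSucc) (l i.succ)))) ∧
    -- injectivity
    (∀ π₁ π₂ : Finset (Finset (Fin n)), INCOn Finset.univ χ π₁ → INCOn Finset.univ χ π₂ →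
      (∀ i : Fin m,
        restrictPart π₁ (Finset.Icc (l i.castSucc) (l i.succ)) =
        restrictPart π₂ (Finset.Icc (l i.castSucc) (l i.succ))) → π₁ = π₂) ∧
    -- surjectivity
    (∀ f : Fin m → Finset (Finset (Fin n)),
      (∀ i : Fin m, NCOn (Finset.Icc (l i.castSucc) (l i.succ)) (f i)) →
      ∃ π : Finset (Finset (Fin n)), INCOn Finset.univ χ π ∧
        ∀ i : Fin m, restrictPart π (Finset.Icc (l i.castSucc) (l i.succ)) = f i) ∧
    -- order isomorphism (both directions)
    (∀ π₁ π₂ : Finset (Finset (Fin n)), INCOn Finset.univ χ π₁ → INCOn Finset.univ χ π₂ →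
      (Refines π₁ π₂ ↔ ∀ i : Fin m,
        Refines (restrictPart π₁ (Finset.Icc (l i.castSucc) (l i.succ)))
                (restrictPart π₂ (Finset.Icc (l i.castSucc) (l i.succ))))) := by

  have hS : Icc (l 0) (l (Fin.last m)) = Finset.univ := by
    ext x
    simp only [h0, hlast, mem_Icc, Fin.le_def, mem_univ, iff_true]
    omega
  have hχ : ∀ i, χ (l i) = true := fun i => (hcirc _).2 ⟨i, rfl⟩
  have backward := fun π₁ π₂ (h₁ : INCOn univ χ π₁) (h₂ : INCOn univ χ π₂) =>
    refines_of_forall_refines_restrictPart (π₂ := π₂) hmono hχ (hS ▸ h₁) (hS ▸ h₂.1)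
  refine ⟨fun π hπ i => hπ.ncOn.restrict (subset_univ _),
    fun π₁ π₂ h₁ h₂ heq => ?_, fun f hf => ?_,
    fun π₁ π₂ h₁ h₂ => ⟨fun h i => h.restrict _, backward π₁ π₂ h₁ h₂⟩⟩
  · exact h₁.1.eq_of_refines h₂.1 (backward _ _ h₁ h₂ fun i => heq i ▸ Refines.refl _)
      (backward _ _ h₂ h₁ fun i => heq i ▸ Refines.refl _)
  · obtain ⟨π, hπ, hres⟩ :=
      exists_incOn_restrictPart_eq hmono (fun k hk => (hcirc k).1 hk) hf (Fin.last m)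
    exact ⟨π, hS ▸ hπ, fun i => hres i (Fin.le_last _)⟩
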